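/- arXiv:1810.12408 — 2 statements merged into one kernel-verified Lean document; each statement's English description precedes it below -/
import Mathlib

section
/- (Concatenation preserves admissibility, symplectic case.) Let d₁, d₂ be standard domino tableaux with d = d₁ + d₂ defined. If both d₁ and d₂ satisfy condition (S) (for every i, the subtableau of boxes numbered ≤ i has an even number of rows of each odd length) and d₁ has an even number of columns, then d satisfies (S). -/
/-- A standard domino tableau, encoded by its chain of subdiagrams:
`shape i r` is the length of row `r` (rows indexed from `0`) of the Young diagram formed
by the boxes with entry `≤ i`.  Equivalently: the boxes are numbered `0, 1, …, steps`,
the box `0` occurs at most once (only when the total size is odd), each `i ≥ 1` occupies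
two adjacent boxes (a horizontal or vertical domino), and the entries are nondecreasing
along rows and columns. -/
structure DominoTableau where
  /-- the largest entry, `⌊n/2⌋` for a tableau with `n` boxes -/
  steps : ℕ
  /-- `shape i r` = length of row `r` of the subtableau formed by the boxes numbered `≤ i` -/
  shape : ℕ → ℕ → ℕ
  /-- every subshape is a Young diagram: row lengths are weakly decreasing -/
  shape_antitone : ∀ i, Antitone (shape i)
  /-- the subshape of entries `≤ 0` consists of at most one box (the box numbered `0`) … -/
  shape_zero_le : shape 0 0 ≤ 1
  /-- … located in the first row -/
  shape_zero : ∀ r, 1 ≤ r → shape 0 r = 0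
  /-- the chain of subshapes is stationary after the last entry -/
  shape_stable : ∀ i, steps ≤ i → shape i = shape steps
  /-- at each step a domino (horizontal or vertical) is added -/
  domino : ∀ i < steps,
    (∃ r, shape (i + 1) r = shape i r + 2 ∧ ∀ r', r' ≠ r → shape (i + 1) r' = shape i r') ∨
    (∃ r, shape (i + 1) r = shape i r + 1 ∧ shape (i + 1) (r + 1) = shape i (r + 1) + 1 ∧
      shape (i + 1) r = shape (i + 1) (r + 1) ∧
      ∀ r', r' ≠ r → r' ≠ r + 1 → shape (i + 1) r' = shape i r')

/-- `d.nrows i ℓ` is the number of rows of length `ℓ` in the subtableau of `d` formed by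
the boxes numbered `≤ i`. -/
noncomputable def DominoTableau.nrows (d : DominoTableau) (i ℓ : ℕ) : ℕ :=
  Nat.card {r : ℕ // d.shape i r = ℓ}

/-- The number of columns of a domino tableau (= the length of its first row). -/
def DominoTableau.cols (d : DominoTableau) : ℕ :=
  d.shape d.steps 0

/-- Condition (O): for every `i` and every even length `ℓ`, the subtableau formed by the
boxes numbered `≤ i` has an even number of rows of length `ℓ`. -/
def DominoTableau.CondO (d : DominoTableau) : Prop :=
  ∀ i ℓ, 0 < ℓ → Even ℓ → Even (d.nrows i ℓ)

/-- Condition (S): for every `i` and every odd length `ℓ`, the subtableau formed by the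
boxes numbered `≤ i` has an even number of rows of length `ℓ`. -/
def DominoTableau.CondS (d : DominoTableau) : Prop :=
  ∀ i ℓ, Odd ℓ → Even (d.nrows i ℓ)

/-- `d.IsConcat d₁ d₂` says that `d` is the concatenation `d₁ + d₂`: `d₂` has even size
(no box numbered `0`), the last column of `d₁` is at least as long as the first column of
`d₂` (so that the concatenation is defined), and `d` is obtained by placing `d₂` to the
right of `d₁` with all entries of `d₂` shifted by `⌊n₁/2⌋ = d₁.steps`. -/
def DominoTableau.IsConcat (d d₁ d₂ : DominoTableau) : Prop :=
  (∀ r, d₂.shape 0 r = 0) ∧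
  Nat.card {r : ℕ // 1 ≤ d₂.shape d₂.steps r} ≤
    Nat.card {r : ℕ // d₁.shape d₁.steps r = d₁.cols} ∧
  d.steps = d₁.steps + d₂.steps ∧
  (∀ i r, d.shape i r = d₁.shape i r + d₂.shape (i - d₁.steps) r)

/-!
Let `c` be the number of columns of `d₁`. The size condition in the definition of `d₁ + d₂`
forces every row met by `d₂` to be a full row (of length `c`) of `d₁`, and below level
`d₁.steps` the part coming from `d₂` is empty. Hence a row of `d` of length `ℓ < c` is a row
of `d₁` of length `ℓ`, a row of `d` of length `ℓ > c` is a row of `d₂` of length `ℓ - c`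
(at the shifted level), and no row of `d` has odd length `ℓ = c` since `c` is even.
-/

-- Both sets are initial segments of `ℕ`, so the inequality of cardinals is an inclusion.
theorem Antitone.eq_apply_zero_of_card_le {f g : ℕ → ℕ} (hf : Antitone f) (hg : Antitone g)
    (hfin : {r | 1 ≤ g r}.Finite)
    (hcard : Nat.card {r // 1 ≤ g r} ≤ Nat.card {r // f r = f 0}) {r : ℕ} (hr : 1 ≤ g r) :
    f r = f 0 := by
  by_contra hne
  have hlt : f r < f 0 := (hf (Nat.zero_le r)).lt_of_ne hne
  have hg_card : r < Nat.card {r // 1 ≤ g r} :=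
    calc r < (Set.Iic r).ncard := by simp
      _ ≤ {s | 1 ≤ g s}.ncard := Set.ncard_le_ncard (fun s hs => hr.trans (hg hs)) hfin
  have hf_card : Nat.card {r // f r = f 0} ≤ r :=
    calc {s | f s = f 0}.ncard ≤ (Set.Iio r).ncard := by
          refine Set.ncard_le_ncard (fun s (hs : f s = f 0) => ?_) (Set.finite_Iio r)
          change s < r
          by_contra! hrs
          have := hf hrs
          omega
      _ = r := by simp
  omega

namespace DominoTableau

section

variable (d : DominoTableau)

theorem exists_shape_succ_eq_of_ne (i : ℕ) :
    ∃ r₀, ∀ r, r ≠ r₀ → r ≠ r₀ + 1 → d.shape (i + 1) r = d.shape i r := by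
  by_cases hi : i < d.steps
  · rcases d.domino i hi with ⟨r₀, -, h⟩ | ⟨r₀, -, -, -, h⟩
    · exact ⟨r₀, fun r hr _ => h r hr⟩
    · exact ⟨r₀, h⟩
  · refine ⟨0, fun r _ _ => ?_⟩
    rw [d.shape_stable i (by omega), d.shape_stable (i + 1) (by omega)]

theorem shape_le_shape_succ (i r : ℕ) : d.shape i r ≤ d.shape (i + 1) r := by
  by_cases hi : i < d.steps
  · rcases d.domino i hi with ⟨r₀, h₁, h⟩ | ⟨r₀, h₁, h₂, -, h⟩
    · by_cases hr : r = r₀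
      · subst hr; omega
      · rw [h r hr]
    · by_cases hr : r = r₀
      · subst hr; omega
      · by_cases hr' : r = r₀ + 1
        · subst hr'; omega
        · rw [h r hr hr']
  · rw [d.shape_stable i (by omega), d.shape_stable (i + 1) (by omega)]

theorem shape_monotone (r : ℕ) : Monotone (d.shape · r) :=
  monotone_nat_of_le_succ (d.shape_le_shape_succ · r)

theorem shape_le_shape_steps (i r : ℕ) : d.shape i r ≤ d.shape d.steps r := by
  rw [← d.shape_stable (max i d.steps) (le_max_right _ _)]
  exact d.shape_monotone r (le_max_left _ _)

theorem shape_le_cols (i r : ℕ) : d.shape i r ≤ d.cols :=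
  (d.shape_le_shape_steps i r).trans (d.shape_antitone d.steps (Nat.zero_le r))

theorem finite_setOf_one_le_shape (i : ℕ) : {r | 1 ≤ d.shape i r}.Finite := by
  induction i with
  | zero =>
    refine (Set.finite_singleton 0).subset fun r hr => ?_
    by_contra hr₀
    have := d.shape_zero r (Nat.one_le_iff_ne_zero.mpr hr₀)
    simp_all
  | succ i ih =>
    obtain ⟨r₀, h⟩ := d.exists_shape_succ_eq_of_ne i
    refine (ih.union (Set.toFinite {r₀, r₀ + 1})).subset fun r hr => ?_
    by_cases hr₀ : r = r₀
    · simp [hr₀]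
    · by_cases hr₁ : r = r₀ + 1
      · simp [hr₁]
      · left
        simpa [h r hr₀ hr₁] using hr

end

namespace IsConcat

variable {d d₁ d₂ : DominoTableau}

theorem shape_eq_cols_of_one_le (h : d.IsConcat d₁ d₂) {i r : ℕ}
    (hr : 1 ≤ d₂.shape (i - d₁.steps) r) :
    d₁.shape i r = d₁.cols := by
  by_cases hi : d₁.steps ≤ i
  · rw [d₁.shape_stable i hi]
    exact Antitone.eq_apply_zero_of_card_le (d₁.shape_antitone _) (d₂.shape_antitone _)
      (d₂.finite_setOf_one_le_shape _) h.2.1 (hr.trans (d₂.shape_le_shape_steps _ r))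
  · rw [Nat.sub_eq_zero_of_le (by omega), h.1 r] at hr
    omega

theorem nrows_of_lt_cols (h : d.IsConcat d₁ d₂) {i ℓ : ℕ} (hℓ : ℓ < d₁.cols) :
    d.nrows i ℓ = d₁.nrows i ℓ :=
  Nat.card_congr <| Equiv.subtypeEquivRight fun r => by
    have := h.shape_eq_cols_of_one_le (i := i) (r := r)
    rw [h.2.2.2 i r]
    omega

theorem nrows_of_cols_lt (h : d.IsConcat d₁ d₂) {i ℓ : ℕ} (hℓ : d₁.cols < ℓ) :
    d.nrows i ℓ = d₂.nrows (i - d₁.steps) (ℓ - d₁.cols) :=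
  Nat.card_congr <| Equiv.subtypeEquivRight fun r => by
    have := h.shape_eq_cols_of_one_le (i := i) (r := r)
    have := d₁.shape_le_cols i r
    rw [h.2.2.2 i r]
    omega

end IsConcat

end DominoTableau

/-- Concatenation preserves admissibility, symplectic case: if `d = d₁ + d₂` with both
`d₁` and `d₂` satisfying (S) and `d₁` having an even number of columns, then `d`
satisfies (S). -/
theorem stmt13 (d d₁ d₂ : DominoTableau) (h : d.IsConcat d₁ d₂)
    (hS1 : d₁.CondS) (hS2 : d₂.CondS) (heven : Even d₁.cols) : d.CondS := by
  intro i ℓ hℓ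
  rcases lt_trichotomy ℓ d₁.cols with hlt | rfl | hgt
  · rw [h.nrows_of_lt_cols hlt]
    exact hS1 i ℓ hℓ
  · exact absurd heven (Nat.not_even_iff_odd.mpr hℓ)
  · rw [h.nrows_of_cols_lt hgt]
    exact hS2 _ _ (Nat.Odd.sub_even hgt.le hℓ heven)
end

section
/- In the setting of a nilpotent skew-adjoint x on a symplectic space (V, ω) with x² = 0, if L ⊆ im x is a line that is isotropic for the induced form χ on im x (χ(x v₁, x v₂) = ω(v₁, x v₂)), then L^⊥ = x^{-1}(L), where L^⊥ is the ω-orthogonal of L in V. -/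
open Module

/-- The orthogonal complement `W^⊥ = {v : ω(v, w) = 0 for all w ∈ W}` of `W`
with respect to a bilinear form `ω`. -/
def perp {K V : Type*} [Field K] [AddCommGroup V] [Module K V]
    (ω : V →ₗ[K] V →ₗ[K] K) (U : Submodule K V) : Submodule K V where
  carrier := {v | ∀ u ∈ U, ω v u = 0}
  zero_mem' := by intro u hu; simp
  add_mem' := by
    intro a b ha hb u hu
    rw [Set.mem_setOf_eq] at ha hb
    rw [map_add, LinearMap.add_apply, ha u hu, hb u hu, add_zero]
  smul_mem' := by
    intro c a ha u hu
    rw [Set.mem_setOf_eq] at ha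
    rw [map_smul, LinearMap.smul_apply, ha u hu, smul_zero]


/-!
Skew-adjointness gives `ω(v, x w) = -ω(x v, w)`, so if `x v` and `x w` lie on the line
`L = K ∙ x w`, then `ω(v, x w)` is a multiple of `χ(x w, x w)`, which vanishes by isotropy:
`x⁻¹(L) ⊆ L^⊥`. Both sides have codimension one: `L^⊥` by nondegeneracy, and `x⁻¹(L)` because
it is an extension of the codimension-two subspace `ker x` by the line `L ⊆ im x`.
-/

section

variable {K V : Type*} [Field K] [AddCommGroup V] [Module K V]

/-- `perp ω U` is by definition Mathlib's orthogonal of `U` for the flipped form `ω.flip`. -/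
theorem finrank_perp [FiniteDimensional K V] {ω : V →ₗ[K] V →ₗ[K] K} (hω : ω.SeparatingLeft)
    (U : Submodule K V) : finrank K (perp ω U) = finrank K V - finrank K U :=
  LinearMap.BilinForm.finrank_orthogonal
    (LinearMap.BilinForm.Nondegenerate.ofSeparatingLeft hω).flip U

theorem finrank_comap_of_le_range {W : Type*} [AddCommGroup W] [Module K W]
    [FiniteDimensional K V] {f : V →ₗ[K] W} {L : Submodule K W} (hL : L ≤ LinearMap.range f) :
    finrank K (L.comap f) = finrank K (LinearMap.ker f) + finrank K L := by
  have hrange : LinearMap.range (f.domRestrict (L.comap f)) = L := by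
    rw [LinearMap.range_domRestrict, Submodule.map_comap_eq_of_le hL]
  have hker :
      finrank K (LinearMap.ker (f.domRestrict (L.comap f))) = finrank K (LinearMap.ker f) := by
    rw [LinearMap.ker_domRestrict]
    exact (Submodule.comapSubtypeEquivOfLe (LinearMap.ker_le_comap f)).finrank_eq
  rw [← (f.domRestrict (L.comap f)).finrank_range_add_finrank_ker, hrange, hker, add_comm]

theorem comap_le_perp_of_isotropic {ω : V →ₗ[K] V →ₗ[K] K} {x : V →ₗ[K] V}
    (hskew : ∀ v w, ω (x v) w = - ω v (x w)) {w : V} (hw : ω w (x w) = 0) :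
    (K ∙ x w).comap x ≤ perp ω (K ∙ x w) := by
  intro v hv u hu
  obtain ⟨a, ha⟩ := Submodule.mem_span_singleton.mp hv
  obtain ⟨c, rfl⟩ := Submodule.mem_span_singleton.mp hu
  calc ω v (c • x w) = -c * ω (x v) w := by
        rw [map_smul, hskew, smul_eq_mul, mul_neg, neg_mul, neg_neg]
    _ = c * a * ω w (x w) := by
        rw [← ha, map_smul, LinearMap.smul_apply, hskew, smul_eq_mul]
        ring
    _ = 0 := by rw [hw, mul_zero]

end

theorem stmt19_general {K V : Type*} [Field K]
    [AddCommGroup V] [Module K V] [FiniteDimensional K V]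
    (ω : V →ₗ[K] V →ₗ[K] K)
    (hnd : ∀ v, (∀ w, ω v w = 0) → v = 0)
    (x : V →ₗ[K] V) (hskew : ∀ v w, ω (x v) w = - ω v (x w))
    (hrank : finrank K ↥(LinearMap.range x) = 2)
    (L : Submodule K V) (hL : L ≤ LinearMap.range x) (hLdim : finrank K ↥L = 1)
    (hiso : ∀ v : V, x v ∈ L → ω v (x v) = 0) :
    perp ω L = Submodule.comap x L := by
  obtain ⟨u, huL, hu0⟩ := Submodule.exists_mem_ne_zero_of_ne_bot (p := L)
    (by rintro rfl; simp at hLdim)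
  obtain ⟨w, rfl⟩ := hL huL
  have hle : L.comap x ≤ perp ω L := by
    rw [eq_span_singleton_of_mem_of_finrank_eq_one hLdim huL hu0]
    exact comap_le_perp_of_isotropic hskew (hiso w huL)
  refine (Submodule.eq_of_le_of_finrank_le hle ?_).symm
  have hrank_nullity := x.finrank_range_add_finrank_ker
  rw [finrank_perp hnd, finrank_comap_of_le_range hL, hLdim]
  omega

/-- Let `(V, ω)` be a finite-dimensional symplectic space over an algebraically closed
field of characteristic zero and `x` a nilpotent skew-adjoint endomorphism with `x² = 0`
(of rank `2`, as in the example of Jordan type `(2,2,1,1)` where the induced form `χ` on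
the `2`-dimensional space `im x` has exactly two isotropic lines).  If `L ⊆ im x` is a
line which is isotropic for the induced form `χ(x v₁, x v₂) = ω(v₁, x v₂)`, then
`L^⊥ = x⁻¹(L)`. -/
theorem stmt19 {K V : Type*} [Field K] [IsAlgClosed K] [CharZero K]
    [AddCommGroup V] [Module K V] [FiniteDimensional K V]
    (ω : V →ₗ[K] V →ₗ[K] K)
    (hnd : ∀ v, (∀ w, ω v w = 0) → v = 0)
    (halt : ∀ v, ω v v = 0)
    (x : V →ₗ[K] V) (hskew : ∀ v w, ω (x v) w = - ω v (x w))
    (hx2 : x ^ 2 = 0) (hrank : finrank K ↥(LinearMap.range x) = 2)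
    (L : Submodule K V) (hL : L ≤ LinearMap.range x) (hLdim : finrank K ↥L = 1)
    (hiso : ∀ v : V, x v ∈ L → ω v (x v) = 0) :
    perp ω L = Submodule.comap x L :=
  stmt19_general ω hnd x hskew hrank L hL hLdim hiso
end
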